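/- (Case N=2 of formula (q1)) Under the same hypotheses (g_i' = f_i, f_{iτ} = k² g_i, Wronskians nonvanishing), define p[2] = k² − (ln W(f₁,f₂))_{yτ} and q[2] = (1/p[2]) ∂_τ [ W(f₁',f₂')/W(f₁,f₂) − (1/2)(W(f₁,f₂)_y/W(f₁,f₂))² ]. Then q[2] = ∂_y ln( W(f₁,f₂)/W(g₁,g₂) ). -/

import Mathlib

/-- Partial derivative in the first ("y") variable. -/
noncomputable def pdy (f : ℝ × ℝ → ℝ) : ℝ × ℝ → ℝ :=
  fun p => deriv (fun y => f (y, p.2)) p.1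

/-- Partial derivative in the second ("τ") variable. -/
noncomputable def pdτ (f : ℝ × ℝ → ℝ) : ℝ × ℝ → ℝ :=
  fun p => deriv (fun τ => f (p.1, τ)) p.2

lemma hasDerivAt_pdy {f : ℝ × ℝ → ℝ} (hf : Differentiable ℝ f) (p : ℝ × ℝ) :
    HasDerivAt (fun y => f (y, p.2)) (pdy f p) p.1 := by
  obtain ⟨a, b⟩ := p
  have h1 : HasDerivAt (fun y : ℝ => (y, b)) ((1 : ℝ), (0 : ℝ)) a :=
    HasDerivAt.prodMk (hasDerivAt_id a) (hasDerivAt_const _ _)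
  have h2 : HasDerivAt (fun y => f (y, b)) (fderiv ℝ f (a, b) (1, 0)) a :=
    (hf (a, b)).hasFDerivAt.comp_hasDerivAt a h1
  have h3 : pdy f (a, b) = fderiv ℝ f (a, b) (1, 0) := h2.deriv
  rw [h3]; exact h2

lemma hasDerivAt_pdτ {f : ℝ × ℝ → ℝ} (hf : Differentiable ℝ f) (p : ℝ × ℝ) :
    HasDerivAt (fun t => f (p.1, t)) (pdτ f p) p.2 := by
  obtain ⟨a, b⟩ := p
  have h1 : HasDerivAt (fun t : ℝ => (a, t)) ((0 : ℝ), (1 : ℝ)) b :=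
    HasDerivAt.prodMk (hasDerivAt_const _ _) (hasDerivAt_id b)
  have h2 : HasDerivAt (fun t => f (a, t)) (fderiv ℝ f (a, b) (0, 1)) b :=
    (hf (a, b)).hasFDerivAt.comp_hasDerivAt b h1
  have h3 : pdτ f (a, b) = fderiv ℝ f (a, b) (0, 1) := h2.deriv
  rw [h3]; exact h2

lemma pdy_eq_fderiv {f : ℝ × ℝ → ℝ} (hf : Differentiable ℝ f) (p : ℝ × ℝ) :
    pdy f p = fderiv ℝ f p (1, 0) := by
  obtain ⟨a, b⟩ := p
  have h1 : HasDerivAt (fun y : ℝ => (y, b)) ((1 : ℝ), (0 : ℝ)) a :=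
    HasDerivAt.prodMk (hasDerivAt_id a) (hasDerivAt_const _ _)
  exact ((hf (a, b)).hasFDerivAt.comp_hasDerivAt a h1).deriv

lemma pdτ_eq_fderiv {f : ℝ × ℝ → ℝ} (hf : Differentiable ℝ f) (p : ℝ × ℝ) :
    pdτ f p = fderiv ℝ f p (0, 1) := by
  obtain ⟨a, b⟩ := p
  have h1 : HasDerivAt (fun t : ℝ => (a, t)) ((0 : ℝ), (1 : ℝ)) b :=
    HasDerivAt.prodMk (hasDerivAt_const _ _) (hasDerivAt_id b)
  exact ((hf (a, b)).hasFDerivAt.comp_hasDerivAt b h1).deriv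

lemma contDiff_pdy {f : ℝ × ℝ → ℝ} (hf : ContDiff ℝ (⊤ : ℕ∞) f) : ContDiff ℝ (⊤ : ℕ∞) (pdy f) := by
  have : pdy f = fun p => fderiv ℝ f p (1, 0) :=
    funext fun p => pdy_eq_fderiv (hf.differentiable (by simp)) p
  rw [this]
  exact (hf.fderiv_right (by simp)).clm_apply contDiff_const

lemma fderiv_apply_vec {f : ℝ × ℝ → ℝ} (hf : ContDiff ℝ (⊤ : ℕ∞) f) (p v w : ℝ × ℝ) :
    fderiv ℝ (fun q => fderiv ℝ f q v) p w = fderiv ℝ (fderiv ℝ f) p w v := by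
  have hd' : Differentiable ℝ (fderiv ℝ f) := (hf.fderiv_right (m := 1) (WithTop.coe_le_coe.mpr le_top)).differentiable (by simp)
  rw [fderiv_clm_apply (hd' p) (differentiableAt_const v)]
  simp

lemma pdτ_pdy_comm {f : ℝ × ℝ → ℝ} (hf : ContDiff ℝ (⊤ : ℕ∞) f) (p : ℝ × ℝ) :
    pdτ (pdy f) p = pdy (pdτ f) p := by
  have hd : Differentiable ℝ f := hf.differentiable (by simp)
  have hd' : Differentiable ℝ (fderiv ℝ f) := (hf.fderiv_right (m := 1) (WithTop.coe_le_coe.mpr le_top)).differentiable (by simp)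
  have hsymm := second_derivative_symmetric (f := f) (f' := fderiv ℝ f)
      (f'' := fderiv ℝ (fderiv ℝ f) p) (fun y => (hd y).hasFDerivAt) (hd' p).hasFDerivAt
  have e1 : pdy f = fun q => fderiv ℝ f q (1, 0) := funext fun q => pdy_eq_fderiv hd q
  have e2 : pdτ f = fun q => fderiv ℝ f q (0, 1) := funext fun q => pdτ_eq_fderiv hd q
  have d1 : Differentiable ℝ (fun q => fderiv ℝ f q ((1:ℝ), (0:ℝ))) :=
    hd'.clm_apply (differentiable_const _)
  have d2 : Differentiable ℝ (fun q => fderiv ℝ f q ((0:ℝ), (1:ℝ))) :=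
    hd'.clm_apply (differentiable_const _)
  rw [e1, e2, pdτ_eq_fderiv d1 p, pdy_eq_fderiv d2 p,
    fderiv_apply_vec hf p (1, 0) (0, 1), fderiv_apply_vec hf p (0, 1) (1, 0)]
  exact hsymm _ _

lemma pdy_const_mul {u : ℝ × ℝ → ℝ} (hu : Differentiable ℝ u) (c : ℝ)
    (q : ℝ × ℝ) : pdy (fun p => c * u p) q = c * pdy u q := by
  simp only [pdy]
  exact ((hasDerivAt_pdy hu q).const_mul c).deriv

/-- Case `N = 2` of formula (q1): `q[2] = ∂_y ln(W(f₁,f₂)/W(g₁,g₂))`. -/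
theorem q1_case_two
    (k : ℝ)
    (f₁ f₂ g₁ g₂ : ℝ × ℝ → ℝ)
    (hf₁ : ContDiff ℝ (⊤ : ℕ∞) f₁) (hf₂ : ContDiff ℝ (⊤ : ℕ∞) f₂)
    (hg₁ : ContDiff ℝ (⊤ : ℕ∞) g₁) (hg₂ : ContDiff ℝ (⊤ : ℕ∞) g₂)
    (hgy₁ : ∀ p, pdy g₁ p = f₁ p) (hgy₂ : ∀ p, pdy g₂ p = f₂ p)
    (hfτ₁ : ∀ p, pdτ f₁ p = k ^ 2 * g₁ p) (hfτ₂ : ∀ p, pdτ f₂ p = k ^ 2 * g₂ p)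
    (W Wg Wf' : ℝ × ℝ → ℝ)
    (hW : W = fun p => f₁ p * pdy f₂ p - pdy f₁ p * f₂ p)
    (hWg : Wg = fun p => g₁ p * pdy g₂ p - pdy g₁ p * g₂ p)
    (hWf' : Wf' = fun p => pdy f₁ p * pdy (pdy f₂) p - pdy (pdy f₁) p * pdy f₂ p)
    (hWne : ∀ p, W p ≠ 0) (hWgne : ∀ p, Wg p ≠ 0)
    (p2 q2 : ℝ × ℝ → ℝ)
    (hp2 : p2 = fun p => k ^ 2 - pdτ (fun q => pdy W q / W q) p)
    (hp2ne : ∀ p, p2 p ≠ 0)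
    (hq2 : q2 = fun p => (1 / p2 p)
        * pdτ (fun q => Wf' q / W q - (1 / 2) * (pdy W q / W q) ^ 2) p) :
    ∀ p, q2 p = pdy W p / W p - pdy Wg p / Wg p := by
  -- basic differentiability
  have df₁ : Differentiable ℝ f₁ := hf₁.differentiable (by simp)
  have df₂ : Differentiable ℝ f₂ := hf₂.differentiable (by simp)
  have dg₁ : Differentiable ℝ g₁ := hg₁.differentiable (by simp)
  have dg₂ : Differentiable ℝ g₂ := hg₂.differentiable (by simp)
  have sf₁' : ContDiff ℝ (⊤ : ℕ∞) (pdy f₁) := contDiff_pdy hf₁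
  have sf₂' : ContDiff ℝ (⊤ : ℕ∞) (pdy f₂) := contDiff_pdy hf₂
  have sf₁'' : ContDiff ℝ (⊤ : ℕ∞) (pdy (pdy f₁)) := contDiff_pdy sf₁'
  have sf₂'' : ContDiff ℝ (⊤ : ℕ∞) (pdy (pdy f₂)) := contDiff_pdy sf₂'
  have df₁' : Differentiable ℝ (pdy f₁) := sf₁'.differentiable (by simp)
  have df₂' : Differentiable ℝ (pdy f₂) := sf₂'.differentiable (by simp)
  have df₁'' : Differentiable ℝ (pdy (pdy f₁)) := sf₁''.differentiable (by simp)
  have df₂'' : Differentiable ℝ (pdy (pdy f₂)) := sf₂''.differentiable (by simp)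
  have sW : ContDiff ℝ (⊤ : ℕ∞) W := by rw [hW]; exact (hf₁.mul sf₂').sub (sf₁'.mul hf₂)
  have sWy : ContDiff ℝ (⊤ : ℕ∞) (pdy W) := contDiff_pdy sW
  have sWf' : ContDiff ℝ (⊤ : ℕ∞) Wf' := by
    rw [hWf']; exact (sf₁'.mul sf₂'').sub (sf₁''.mul sf₂')
  have dW : Differentiable ℝ W := sW.differentiable (by simp)
  have dWy : Differentiable ℝ (pdy W) := sWy.differentiable (by simp)
  have dWf' : Differentiable ℝ Wf' := sWf'.differentiable (by simp)
  -- mixed partials of f₁, f₂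
  have Efyτ₁ : ∀ q, pdτ (pdy f₁) q = k ^ 2 * f₁ q := by
    intro q
    rw [pdτ_pdy_comm hf₁ q]
    have e : pdτ f₁ = fun r => k ^ 2 * g₁ r := funext hfτ₁
    rw [e, pdy_const_mul dg₁, hgy₁]
  have Efyτ₂ : ∀ q, pdτ (pdy f₂) q = k ^ 2 * f₂ q := by
    intro q
    rw [pdτ_pdy_comm hf₂ q]
    have e : pdτ f₂ = fun r => k ^ 2 * g₂ r := funext hfτ₂
    rw [e, pdy_const_mul dg₂, hgy₂]
  have Efyyτ₁ : ∀ q, pdτ (pdy (pdy f₁)) q = k ^ 2 * pdy f₁ q := by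
    intro q
    rw [pdτ_pdy_comm sf₁' q]
    have e : pdτ (pdy f₁) = fun r => k ^ 2 * f₁ r := funext Efyτ₁
    rw [e, pdy_const_mul df₁]
  have Efyyτ₂ : ∀ q, pdτ (pdy (pdy f₂)) q = k ^ 2 * pdy f₂ q := by
    intro q
    rw [pdτ_pdy_comm sf₂' q]
    have e : pdτ (pdy f₂) = fun r => k ^ 2 * f₂ r := funext Efyτ₂
    rw [e, pdy_const_mul df₂]
  -- pdy W
  have EWy : ∀ q, pdy W q = f₁ q * pdy (pdy f₂) q - pdy (pdy f₁) q * f₂ q := by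
    intro q
    have h : HasDerivAt
        (fun y => f₁ (y, q.2) * pdy f₂ (y, q.2) - pdy f₁ (y, q.2) * f₂ (y, q.2))
        (pdy f₁ q * pdy f₂ q + f₁ q * pdy (pdy f₂) q -
          (pdy (pdy f₁) q * f₂ q + pdy f₁ q * pdy f₂ q)) q.1 :=
      ((hasDerivAt_pdy df₁ q).mul (hasDerivAt_pdy df₂' q)).sub
        ((hasDerivAt_pdy df₁' q).mul (hasDerivAt_pdy df₂ q))
    have h2 : pdy W q = pdy f₁ q * pdy f₂ q + f₁ q * pdy (pdy f₂) q -
        (pdy (pdy f₁) q * f₂ q + pdy f₁ q * pdy f₂ q) := by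
      rw [hW]; exact h.deriv
    rw [h2]; ring
  have EWfun : pdy W = fun q => f₁ q * pdy (pdy f₂) q - pdy (pdy f₁) q * f₂ q :=
    funext EWy
  intro p
  -- pointwise values at p
  have hWp : W p = f₁ p * pdy f₂ p - pdy f₁ p * f₂ p := by rw [hW]
  have hWf'p : Wf' p = pdy f₁ p * pdy (pdy f₂) p - pdy (pdy f₁) p * pdy f₂ p := by
    rw [hWf']
  have hWgp : Wg p = g₁ p * f₂ p - f₁ p * g₂ p := by
    rw [hWg]; simp only [hgy₁, hgy₂]
  -- pdy Wg at p
  have hWg2 : Wg = fun r => g₁ r * f₂ r - f₁ r * g₂ r := by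
    rw [hWg]; funext r; rw [hgy₁, hgy₂]
  have EWgy : pdy Wg p = g₁ p * pdy f₂ p - pdy f₁ p * g₂ p := by
    have h : HasDerivAt
        (fun y => g₁ (y, p.2) * f₂ (y, p.2) - f₁ (y, p.2) * g₂ (y, p.2))
        (pdy g₁ p * f₂ p + g₁ p * pdy f₂ p - (pdy f₁ p * g₂ p + f₁ p * pdy g₂ p)) p.1 :=
      ((hasDerivAt_pdy dg₁ p).mul (hasDerivAt_pdy df₂ p)).sub
        ((hasDerivAt_pdy df₁ p).mul (hasDerivAt_pdy dg₂ p))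
    have h2 : pdy Wg p = pdy g₁ p * f₂ p + g₁ p * pdy f₂ p -
        (pdy f₁ p * g₂ p + f₁ p * pdy g₂ p) := by
      rw [hWg2]; exact h.deriv
    rw [h2, hgy₁, hgy₂]; ring
  -- pdτ W at p
  have EWτ : pdτ W p = k ^ 2 * (g₁ p * pdy f₂ p - pdy f₁ p * g₂ p) := by
    have h : HasDerivAt
        (fun t => f₁ (p.1, t) * pdy f₂ (p.1, t) - pdy f₁ (p.1, t) * f₂ (p.1, t))
        (pdτ f₁ p * pdy f₂ p + f₁ p * pdτ (pdy f₂) p -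
          (pdτ (pdy f₁) p * f₂ p + pdy f₁ p * pdτ f₂ p)) p.2 :=
      ((hasDerivAt_pdτ df₁ p).mul (hasDerivAt_pdτ df₂' p)).sub
        ((hasDerivAt_pdτ df₁' p).mul (hasDerivAt_pdτ df₂ p))
    have h2 : pdτ W p = pdτ f₁ p * pdy f₂ p + f₁ p * pdτ (pdy f₂) p -
        (pdτ (pdy f₁) p * f₂ p + pdy f₁ p * pdτ f₂ p) := by
      rw [hW]; exact h.deriv
    rw [h2, hfτ₁, hfτ₂, Efyτ₁, Efyτ₂]; ring
  -- pdτ Wf' at p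
  have EWf'τ : pdτ Wf' p = k ^ 2 * (f₁ p * pdy (pdy f₂) p - pdy (pdy f₁) p * f₂ p) := by
    have h : HasDerivAt
        (fun t => pdy f₁ (p.1, t) * pdy (pdy f₂) (p.1, t) -
          pdy (pdy f₁) (p.1, t) * pdy f₂ (p.1, t))
        (pdτ (pdy f₁) p * pdy (pdy f₂) p + pdy f₁ p * pdτ (pdy (pdy f₂)) p -
          (pdτ (pdy (pdy f₁)) p * pdy f₂ p + pdy (pdy f₁) p * pdτ (pdy f₂) p)) p.2 :=
      ((hasDerivAt_pdτ df₁' p).mul (hasDerivAt_pdτ df₂'' p)).sub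
        ((hasDerivAt_pdτ df₁'' p).mul (hasDerivAt_pdτ df₂' p))
    have h2 : pdτ Wf' p = pdτ (pdy f₁) p * pdy (pdy f₂) p + pdy f₁ p * pdτ (pdy (pdy f₂)) p -
        (pdτ (pdy (pdy f₁)) p * pdy f₂ p + pdy (pdy f₁) p * pdτ (pdy f₂) p) := by
      rw [hWf']; exact h.deriv
    rw [h2, Efyτ₁, Efyτ₂, Efyyτ₁, Efyyτ₂]; ring
  -- pdτ (pdy W) at p
  have EWyτ : pdτ (pdy W) p = k ^ 2 * (g₁ p * pdy (pdy f₂) p - pdy (pdy f₁) p * g₂ p +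
      (f₁ p * pdy f₂ p - pdy f₁ p * f₂ p)) := by
    have h : HasDerivAt
        (fun t => f₁ (p.1, t) * pdy (pdy f₂) (p.1, t) - pdy (pdy f₁) (p.1, t) * f₂ (p.1, t))
        (pdτ f₁ p * pdy (pdy f₂) p + f₁ p * pdτ (pdy (pdy f₂)) p -
          (pdτ (pdy (pdy f₁)) p * f₂ p + pdy (pdy f₁) p * pdτ f₂ p)) p.2 :=
      ((hasDerivAt_pdτ df₁ p).mul (hasDerivAt_pdτ df₂'' p)).sub
        ((hasDerivAt_pdτ df₁'' p).mul (hasDerivAt_pdτ df₂ p))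
    have h2 : pdτ (pdy W) p = pdτ f₁ p * pdy (pdy f₂) p + f₁ p * pdτ (pdy (pdy f₂)) p -
        (pdτ (pdy (pdy f₁)) p * f₂ p + pdy (pdy f₁) p * pdτ f₂ p) := by
      rw [EWfun]; exact h.deriv
    rw [h2, hfτ₁, hfτ₂, Efyyτ₁, Efyyτ₂]; ring
  -- the two τ-derivatives of quotients
  have EP : pdτ (fun q => pdy W q / W q) p
      = (pdτ (pdy W) p * W p - pdy W p * pdτ W p) / W p ^ 2 :=
    ((hasDerivAt_pdτ dWy p).div (hasDerivAt_pdτ dW p) (hWne p)).deriv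
  have EQ : pdτ (fun q => Wf' q / W q - 1 / 2 * (pdy W q / W q) ^ 2) p
      = (pdτ Wf' p * W p - Wf' p * pdτ W p) / W p ^ 2
        - 1 / 2 * (((2 : ℕ) : ℝ) * (pdy W p / W p) ^ (2 - 1)
            * ((pdτ (pdy W) p * W p - pdy W p * pdτ W p) / W p ^ 2)) :=
    (((hasDerivAt_pdτ dWf' p).div (hasDerivAt_pdτ dW p) (hWne p)).sub
      ((((hasDerivAt_pdτ dWy p).div (hasDerivAt_pdτ dW p) (hWne p)).pow 2).const_mul
        (1 / 2 : ℝ))).deriv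
  -- nonvanishing facts in atomic form
  have hWne' : f₁ p * pdy f₂ p - pdy f₁ p * f₂ p ≠ 0 := by rw [← hWp]; exact hWne p
  have hWgne' : g₁ p * f₂ p - f₁ p * g₂ p ≠ 0 := by rw [← hWgp]; exact hWgne p
  have hx : k ^ 2 - pdτ (fun q => pdy W q / W q) p ≠ 0 := by
    have h := hp2ne p; rw [hp2] at h; exact h
  rw [EP, EWyτ, EWτ, EWy p, hWp] at hx
  simp only [hq2, hp2]
  rw [EP, EQ, EWf'τ, EWyτ, EWτ, EWy p, EWgy, hWp, hWgp, hWf'p]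
  rw [one_div_mul_eq_div, div_eq_iff hx]
  simp only [Nat.cast_ofNat, Nat.reduceSub, pow_one]
  have h1 : f₁ p * pdy f₂ p - f₂ p * pdy f₁ p ≠ 0 := by rwa [mul_comm (f₂ p)]
  have h2 : f₂ p * g₁ p - f₁ p * g₂ p ≠ 0 := by rwa [mul_comm (f₂ p)]
  field_simp
  ring
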